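/- arXiv:1706.07878 — 3 statements merged into one kernel-verified Lean document; each statement's English description precedes it below -/
import Mathlib

section
/- Let γ(t) = cos(ω₁t)A₁ + sin(ω₁t)B₁ + cos(ω₂t)A₂ + sin(ω₂t)B₂ be a curve in ℝ⁴ with 0 < ω₁ < ω₂, ω₂ ≠ 3ω₁, and suppose |γ(t)| = 1 for all t. Then the vectors A₁, B₁, A₂, B₂ are pairwise orthogonal, |A₁| = |B₁|, |A₂| = |B₂|, and |A₁|² + |A₂|² = 1. -/
/-!
Expanding `‖γ t‖²` by the product-to-sum formulas turns `‖γ t‖² = 1` into the vanishing of a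
trigonometric polynomial with frequencies `0, 2ω₁, 2ω₂, ω₂ - ω₁, ω₂ + ω₁`. These are pairwise
distinct (`ω₂ ≠ 3ω₁` is exactly `2ω₁ ≠ ω₂ - ω₁`), so by linear independence of the characters
`t ↦ exp (i μ t)` all its coefficients vanish, and these coefficients are the differences of
squared norms and the sums and differences of the inner products.
-/

open Function

section

open Complex Real

lemma eq_of_forall_cexp_mul_I_eq {μ ν : ℝ}
    (h : ∀ t : ℝ, cexp (μ * t * I) = cexp (ν * t * I)) : μ = ν := by
  by_contra hne
  have hne' : (μ : ℂ) - ν ≠ 0 := sub_ne_zero.2 (by exact_mod_cast hne)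
  have h1 : cexp ((μ - ν) * (π / (μ - ν) : ℝ) * I) = 1 := by
    rw [sub_mul, sub_mul, Complex.exp_sub, h, div_self (Complex.exp_ne_zero _)]
  have hπ : ((μ : ℂ) - ν) * (π / (μ - ν) : ℝ) = π := by
    push_cast; field_simp
  rw [hπ, exp_pi_mul_I] at h1
  norm_num at h1

lemma linearIndependent_cexp_mul_I {ι : Type*} {μ : ι → ℝ} (hμ : Injective μ) :
    LinearIndependent ℂ (fun i (t : ℝ) => cexp (μ i * t * I)) := by
  let χ : ι → Multiplicative ℝ →* ℂ := fun i =>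
    { toFun := fun t => cexp (μ i * t.toAdd * I)
      map_one' := by simp
      map_mul' := fun x y => by rw [← Complex.exp_add]; push_cast [toAdd_mul]; ring_nf }
  have hχ : Injective χ := fun i j hij =>
    hμ (eq_of_forall_cexp_mul_I_eq fun t => DFunLike.congr_fun hij (Multiplicative.ofAdd t))
  exact (linearIndependent_monoidHom (Multiplicative ℝ) ℂ).comp χ hχ

lemma ofReal_mul_cos_add_mul_sin (a b θ : ℝ) :
    ((a * Real.cos θ + b * Real.sin θ : ℝ) : ℂ) =
      (a - b * I) / 2 * cexp (θ * I) + (a + b * I) / 2 * cexp (-θ * I) := by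
  rw [exp_mul_I, exp_mul_I, Complex.cos_neg, Complex.sin_neg]
  push_cast
  linear_combination (b * Complex.sin θ) * I_sq

lemma trig_sum_coeffs_eq_zero {ι : Type*} [Fintype ι] {ω : ι → ℝ} (hω : Injective ω)
    (hpos : ∀ i, 0 < ω i) {c : ℝ} {a b : ι → ℝ}
    (h : ∀ t, c + ∑ i, (a i * Real.cos (ω i * t) + b i * Real.sin (ω i * t)) = 0) :
    c = 0 ∧ ∀ i, a i = 0 ∧ b i = 0 := by
  let μ : Option (ι ⊕ ι) → ℝ := fun o => o.elim 0 (Sum.elim ω (-ω))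
  let z : Option (ι ⊕ ι) → ℂ := fun o =>
    o.elim c (Sum.elim (fun i => (a i - b i * I) / 2) (fun i => (a i + b i * I) / 2))
  have hμ : Injective μ := by
    rintro (_ | i | i) (_ | j | j) hij <;>
      simp only [μ, Option.elim, Sum.elim_inl, Sum.elim_inr, Pi.neg_apply] at hij
    · rfl
    · linarith [hpos j]
    · linarith [hpos j]
    · linarith [hpos i]
    · rw [hω hij]
    · linarith [hpos i, hpos j]
    · linarith [hpos i]
    · linarith [hpos i, hpos j]
    · rw [hω (neg_inj.1 hij)]
  have hz : ∀ o, z o = 0 := by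
    refine Fintype.linearIndependent_iff.mp (linearIndependent_cexp_mul_I hμ) z (funext fun t => ?_)
    have hterm : ∀ i, ((a i * Real.cos (ω i * t) + b i * Real.sin (ω i * t) : ℝ) : ℂ) =
        (a i - b i * I) / 2 * cexp (ω i * t * I) +
          (a i + b i * I) / 2 * cexp (↑(-ω i) * t * I) := by
      intro i
      rw [ofReal_mul_cos_add_mul_sin]
      push_cast
      ring_nf
    simp only [Fintype.sum_option, Fintype.sum_sum_type, z, μ, Option.elim, Sum.elim_inl,
      Sum.elim_inr, Pi.neg_apply, Finset.sum_apply, Pi.smul_apply, smul_eq_mul, Pi.zero_apply,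
      ← Finset.sum_add_distrib, ← hterm, ofReal_zero, zero_mul, Complex.exp_zero, mul_one]
    exact_mod_cast h t
  have hcoeff : ∀ {x y : ℝ}, (x + y * I) / 2 = 0 → x = 0 ∧ y = 0 := fun hxy => by
    simpa [Complex.ext_iff] using hxy
  exact ⟨ofReal_eq_zero.1 (hz none), fun i => hcoeff (hz (some (.inr i)))⟩

end

open Real

lemma norm_cos_smul_add_sin_smul_sq {E : Type*} [NormedAddCommGroup E] [InnerProductSpace ℝ E]
    (θ₁ θ₂ : ℝ) (A₁ B₁ A₂ B₂ : E) :
    ‖cos θ₁ • A₁ + sin θ₁ • B₁ + cos θ₂ • A₂ + sin θ₂ • B₂‖ ^ 2 =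
      (‖A₁‖ ^ 2 + ‖B₁‖ ^ 2 + ‖A₂‖ ^ 2 + ‖B₂‖ ^ 2) / 2
      + ((‖A₁‖ ^ 2 - ‖B₁‖ ^ 2) / 2 * cos (2 * θ₁) + inner ℝ A₁ B₁ * sin (2 * θ₁))
      + ((‖A₂‖ ^ 2 - ‖B₂‖ ^ 2) / 2 * cos (2 * θ₂) + inner ℝ A₂ B₂ * sin (2 * θ₂))
      + ((inner ℝ A₁ A₂ + inner ℝ B₁ B₂) * cos (θ₂ - θ₁)
          + (inner ℝ A₁ B₂ - inner ℝ B₁ A₂) * sin (θ₂ - θ₁))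
      + ((inner ℝ A₁ A₂ - inner ℝ B₁ B₂) * cos (θ₂ + θ₁)
          + (inner ℝ A₁ B₂ + inner ℝ B₁ A₂) * sin (θ₂ + θ₁)) := by
  rw [← real_inner_self_eq_norm_sq]
  simp only [inner_add_left, inner_add_right, real_inner_smul_left, real_inner_smul_right,
    real_inner_comm B₁ A₁, real_inner_comm A₂ A₁, real_inner_comm B₂ A₁, real_inner_comm A₂ B₁,
    real_inner_comm B₂ B₁, real_inner_comm B₂ A₂,
    cos_two_mul, sin_two_mul, cos_sub, sin_sub, cos_add, sin_add]
  simp only [real_inner_self_eq_norm_sq]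
  linear_combination ‖B₁‖ ^ 2 * sin_sq_add_cos_sq θ₁ + ‖B₂‖ ^ 2 * sin_sq_add_cos_sq θ₂

theorem stmt_8 (ω₁ ω₂ : ℝ) (h1 : 0 < ω₁) (h12 : ω₁ < ω₂) (h3 : ω₂ ≠ 3 * ω₁)
    (A₁ B₁ A₂ B₂ : EuclideanSpace ℝ (Fin 4))
    (γ : ℝ → EuclideanSpace ℝ (Fin 4))
    (hγ : ∀ t : ℝ, γ t =
      Real.cos (ω₁ * t) • A₁ + Real.sin (ω₁ * t) • B₁ +
        Real.cos (ω₂ * t) • A₂ + Real.sin (ω₂ * t) • B₂)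
    (hsphere : ∀ t : ℝ, ‖γ t‖ = 1) :
    inner ℝ A₁ B₁ = (0 : ℝ) ∧ inner ℝ A₁ A₂ = (0 : ℝ) ∧ inner ℝ A₁ B₂ = (0 : ℝ) ∧
      inner ℝ B₁ A₂ = (0 : ℝ) ∧ inner ℝ B₁ B₂ = (0 : ℝ) ∧ inner ℝ A₂ B₂ = (0 : ℝ) ∧
      ‖A₁‖ = ‖B₁‖ ∧ ‖A₂‖ = ‖B₂‖ ∧ ‖A₁‖ ^ 2 + ‖A₂‖ ^ 2 = 1 := by
  have hω : Injective ![2 * ω₁, 2 * ω₂, ω₂ - ω₁, ω₂ + ω₁] := by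
    simp only [Matrix.vecCons, Fin.cons_injective_iff, Set.mem_range, Fin.exists_fin_succ,
      Fin.cons_zero, Fin.cons_succ, IsEmpty.exists_iff, or_false, not_or,
      injective_of_subsingleton, and_true]
    refine ⟨⟨?_, fun h => h3 (by linarith), ?_⟩, ⟨?_, ?_⟩, ?_⟩ <;> intro h <;> linarith
  have hpos : ∀ i, 0 < ![2 * ω₁, 2 * ω₂, ω₂ - ω₁, ω₂ + ω₁] i := by
    simp only [Fin.forall_fin_succ, IsEmpty.forall_iff, Matrix.cons_val_zero,
      Matrix.cons_val_succ, and_true]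
    refine ⟨?_, ?_, ?_, ?_⟩ <;> linarith
  obtain ⟨hc, hab⟩ := trig_sum_coeffs_eq_zero hω hpos
    (c := (‖A₁‖ ^ 2 + ‖B₁‖ ^ 2 + ‖A₂‖ ^ 2 + ‖B₂‖ ^ 2) / 2 - 1)
    (a := ![(‖A₁‖ ^ 2 - ‖B₁‖ ^ 2) / 2, (‖A₂‖ ^ 2 - ‖B₂‖ ^ 2) / 2,
      inner ℝ A₁ A₂ + inner ℝ B₁ B₂, inner ℝ A₁ A₂ - inner ℝ B₁ B₂])
    (b := ![inner ℝ A₁ B₁, inner ℝ A₂ B₂, inner ℝ A₁ B₂ - inner ℝ B₁ A₂,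
      inner ℝ A₁ B₂ + inner ℝ B₁ A₂]) fun t => by
    have h := norm_cos_smul_add_sin_smul_sq (ω₁ * t) (ω₂ * t) A₁ B₁ A₂ B₂
    rw [← hγ, hsphere] at h
    simp only [Fin.sum_univ_four, Matrix.cons_val_zero, Matrix.cons_val_one, Matrix.cons_val]
    ring_nf at h ⊢
    linarith
  simp only [Fin.forall_fin_succ, IsEmpty.forall_iff, Matrix.cons_val_zero, Matrix.cons_val_succ,
    and_true] at hab
  obtain ⟨⟨hnorm₁, hA₁B₁⟩, ⟨hnorm₂, hA₂B₂⟩, ⟨hcos_sub, hsin_sub⟩, ⟨hcos_add, hsin_add⟩⟩ := hab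
  refine ⟨hA₁B₁, by linarith, by linarith, by linarith, by linarith, hA₂B₂, ?_, ?_, by linarith⟩
  · exact (sq_eq_sq₀ (norm_nonneg _) (norm_nonneg _)).1 (by linarith)
  · exact (sq_eq_sq₀ (norm_nonneg _) (norm_nonneg _)).1 (by linarith)
end

section
/- Let γ(t) = cos(ω₁t)A₁ + sin(ω₁t)B₁ + cos(ω₂t)A₂ + sin(ω₂t)B₂ with ω₂ = 3ω₁ > 0, and suppose |γ(t)| = 1 and |γ'(t)| = C (constant) for all t. Then A₁, B₁, A₂, B₂ are pairwise orthogonal, |A₁| = |B₁|, |A₂| = |B₂|, and |A₁|² + |A₂|² = 1. -/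
/-!
Write `γ = h₁ + h₂` with `hᵢ(t) = cos (ωᵢ t) Aᵢ + sin (ωᵢ t) Bᵢ`. Since `ω₂ = 3 ω₁`, the functions
`‖γ‖²` and `‖γ'‖²` are trigonometric polynomials of degree three in `y = 2 ω₁ t` whose coefficients
are linear in the Gram entries of `A₁, B₁, A₂, B₂`; being constant, all their non-constant
coefficients vanish. The derivative is again of this shape, with `(A₁, B₁, A₂, B₂)` replaced by
`ω₁ (B₁, -A₁, 3 B₂, -3 A₂)`, and the two resulting linear systems together force the conclusion.
-/

open Real InnerProductSpace

section TrigPolynomial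

theorem eq_of_forall_cos_poly_three_eq {c d α γ ε : ℝ}
    (h : ∀ y, c + α * cos y + γ * cos (2 * y) + ε * cos (3 * y) = d) :
    c = d ∧ α = 0 ∧ γ = 0 ∧ ε = 0 := by
  have h₀ := h 0
  have h₁ := h (π / 3)
  have h₂ := h (π / 2)
  have h₃ := h π
  simp only [cos_two_mul, cos_three_mul, cos_zero, cos_pi_div_three, cos_pi_div_two,
    cos_pi] at h₀ h₁ h₂ h₃
  refine ⟨?_, ?_, ?_, ?_⟩ <;> linarith

theorem eq_zero_of_forall_sin_poly_three_eq_zero {β δ ζ : ℝ}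
    (h : ∀ y, β * sin y + δ * sin (2 * y) + ζ * sin (3 * y) = 0) :
    β = 0 ∧ δ = 0 ∧ ζ = 0 := by
  have hderiv (y : ℝ) : HasDerivAt (fun y => β * sin y + δ * sin (2 * y) + ζ * sin (3 * y))
      (β * cos y + 2 * δ * cos (2 * y) + 3 * ζ * cos (3 * y)) y := by
    have h₂ : HasDerivAt (fun y => sin (2 * y)) (cos (2 * y) * 2) y := by
      simpa using ((hasDerivAt_id y).const_mul 2).sin
    have h₃ : HasDerivAt (fun y => sin (3 * y)) (cos (3 * y) * 3) y := by
      simpa using ((hasDerivAt_id y).const_mul 3).sin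
    exact ((((hasDerivAt_sin y).const_mul β).add (h₂.const_mul δ)).add
      (h₃.const_mul ζ)).congr_deriv (by ring)
  have hcos (y : ℝ) : 0 + β * cos y + 2 * δ * cos (2 * y) + 3 * ζ * cos (3 * y) = 0 := by
    rw [zero_add, ← (hderiv y).deriv, funext h, deriv_const]
  obtain ⟨-, hβ, hδ, hζ⟩ := eq_of_forall_cos_poly_three_eq hcos
  exact ⟨hβ, by linarith, by linarith⟩

theorem eq_of_forall_trig_poly_three_eq {c d α β γ δ ε ζ : ℝ}
    (h : ∀ y, c + α * cos y + β * sin y + γ * cos (2 * y) + δ * sin (2 * y) +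
      ε * cos (3 * y) + ζ * sin (3 * y) = d) :
    c = d ∧ α = 0 ∧ β = 0 ∧ γ = 0 ∧ δ = 0 ∧ ε = 0 ∧ ζ = 0 := by
  have hneg (y : ℝ) := h (-y)
  simp only [mul_neg, cos_neg, sin_neg] at hneg
  obtain ⟨hc, hα, hγ, hε⟩ := eq_of_forall_cos_poly_three_eq (c := c) (d := d) (α := α)
    (γ := γ) (ε := ε) fun y => by linarith [h y, hneg y]
  obtain ⟨hβ, hδ, hζ⟩ := eq_zero_of_forall_sin_poly_three_eq_zero (β := β) (δ := δ) (ζ := ζ)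
    fun y => by linarith [h y, hneg y]
  exact ⟨hc, hα, hβ, hγ, hδ, hε, hζ⟩

end TrigPolynomial

section Harmonic

variable {E : Type*} [NormedAddCommGroup E] [InnerProductSpace ℝ E]

noncomputable def harmonicCurve (ω : ℝ) (A B : E) (t : ℝ) : E :=
  cos (ω * t) • A + sin (ω * t) • B

theorem hasDerivAt_harmonicCurve (ω : ℝ) (A B : E) (t : ℝ) :
    HasDerivAt (harmonicCurve ω A B) (ω • harmonicCurve ω B (-A) t) t := by
  have hc := ((hasDerivAt_id t).const_mul ω).cos.smul_const A
  have hs := ((hasDerivAt_id t).const_mul ω).sin.smul_const B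
  refine (hc.add hs).congr_deriv ?_
  simp only [harmonicCurve, id, mul_one]
  module

theorem inner_harmonicCurve_harmonicCurve (a b : ℝ) (A B C D : E) (t : ℝ) :
    ⟪harmonicCurve a A B t, harmonicCurve b C D t⟫_ℝ =
      ((⟪A, C⟫_ℝ + ⟪B, D⟫_ℝ) * cos ((b - a) * t) + (⟪A, D⟫_ℝ - ⟪B, C⟫_ℝ) * sin ((b - a) * t) +
        (⟪A, C⟫_ℝ - ⟪B, D⟫_ℝ) * cos ((b + a) * t) +
        (⟪A, D⟫_ℝ + ⟪B, C⟫_ℝ) * sin ((b + a) * t)) / 2 := by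
  simp only [harmonicCurve, inner_add_left, inner_add_right, real_inner_smul_left,
    real_inner_smul_right, sub_mul, add_mul, cos_sub, sin_sub, cos_add, sin_add]
  ring

theorem norm_sq_harmonicCurve (a : ℝ) (A B : E) (t : ℝ) :
    ‖harmonicCurve a A B t‖ ^ 2 =
      (‖A‖ ^ 2 + ‖B‖ ^ 2) / 2 + (‖A‖ ^ 2 - ‖B‖ ^ 2) / 2 * cos (2 * a * t) +
        ⟪A, B⟫_ℝ * sin (2 * a * t) := by
  rw [← real_inner_self_eq_norm_sq, inner_harmonicCurve_harmonicCurve, real_inner_comm B A,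
    real_inner_self_eq_norm_sq, real_inner_self_eq_norm_sq, sub_self, zero_mul, cos_zero,
    sin_zero, ← two_mul]
  ring

theorem norm_sq_harmonicCurve_add_harmonicCurve_three_mul (ω : ℝ) (A₁ B₁ A₂ B₂ : E) (t : ℝ) :
    ‖harmonicCurve ω A₁ B₁ t + harmonicCurve (3 * ω) A₂ B₂ t‖ ^ 2 =
      (‖A₁‖ ^ 2 + ‖B₁‖ ^ 2 + ‖A₂‖ ^ 2 + ‖B₂‖ ^ 2) / 2 +
        ((‖A₁‖ ^ 2 - ‖B₁‖ ^ 2) / 2 + ⟪A₁, A₂⟫_ℝ + ⟪B₁, B₂⟫_ℝ) * cos (2 * ω * t) +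
        (⟪A₁, B₁⟫_ℝ + ⟪A₁, B₂⟫_ℝ - ⟪B₁, A₂⟫_ℝ) * sin (2 * ω * t) +
        (⟪A₁, A₂⟫_ℝ - ⟪B₁, B₂⟫_ℝ) * cos (2 * (2 * ω * t)) +
        (⟪A₁, B₂⟫_ℝ + ⟪B₁, A₂⟫_ℝ) * sin (2 * (2 * ω * t)) +
        (‖A₂‖ ^ 2 - ‖B₂‖ ^ 2) / 2 * cos (3 * (2 * ω * t)) +
        ⟪A₂, B₂⟫_ℝ * sin (3 * (2 * ω * t)) := by
  rw [norm_add_sq_real, norm_sq_harmonicCurve, norm_sq_harmonicCurve,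
    inner_harmonicCurve_harmonicCurve,
    show (3 * ω - ω) * t = 2 * ω * t by ring, show (3 * ω + ω) * t = 2 * (2 * ω * t) by ring,
    show 2 * (3 * ω) * t = 3 * (2 * ω * t) by ring]
  ring

theorem gram_eqs_of_norm_sq_harmonicCurve_add_harmonicCurve_three_mul_eq {ω K : ℝ} (hω : ω ≠ 0)
    {A₁ B₁ A₂ B₂ : E}
    (h : ∀ t, ‖harmonicCurve ω A₁ B₁ t + harmonicCurve (3 * ω) A₂ B₂ t‖ ^ 2 = K) :
    (‖A₁‖ ^ 2 + ‖B₁‖ ^ 2 + ‖A₂‖ ^ 2 + ‖B₂‖ ^ 2) / 2 = K ∧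
      (‖A₁‖ ^ 2 - ‖B₁‖ ^ 2) / 2 + ⟪A₁, A₂⟫_ℝ + ⟪B₁, B₂⟫_ℝ = 0 ∧
      ⟪A₁, B₁⟫_ℝ + ⟪A₁, B₂⟫_ℝ - ⟪B₁, A₂⟫_ℝ = 0 ∧ ⟪A₁, A₂⟫_ℝ - ⟪B₁, B₂⟫_ℝ = 0 ∧
      ⟪A₁, B₂⟫_ℝ + ⟪B₁, A₂⟫_ℝ = 0 ∧ (‖A₂‖ ^ 2 - ‖B₂‖ ^ 2) / 2 = 0 ∧ ⟪A₂, B₂⟫_ℝ = 0 := by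
  refine eq_of_forall_trig_poly_three_eq fun y => ?_
  have hy : 2 * ω * (y / (2 * ω)) = y := by field_simp
  simpa only [norm_sq_harmonicCurve_add_harmonicCurve_three_mul, hy] using h (y / (2 * ω))

end Harmonic

theorem stmt_9 (ω₁ ω₂ : ℝ) (h1 : 0 < ω₁) (h3 : ω₂ = 3 * ω₁)
    (A₁ B₁ A₂ B₂ : EuclideanSpace ℝ (Fin 4))
    (γ : ℝ → EuclideanSpace ℝ (Fin 4))
    (hγ : ∀ t : ℝ, γ t =
      Real.cos (ω₁ * t) • A₁ + Real.sin (ω₁ * t) • B₁ +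
        Real.cos (ω₂ * t) • A₂ + Real.sin (ω₂ * t) • B₂)
    (hsphere : ∀ t : ℝ, ‖γ t‖ = 1)
    (Cs : ℝ) (hspeed : ∀ t : ℝ, ‖deriv γ t‖ = Cs) :
    inner ℝ A₁ B₁ = (0 : ℝ) ∧ inner ℝ A₁ A₂ = (0 : ℝ) ∧ inner ℝ A₁ B₂ = (0 : ℝ) ∧
      inner ℝ B₁ A₂ = (0 : ℝ) ∧ inner ℝ B₁ B₂ = (0 : ℝ) ∧ inner ℝ A₂ B₂ = (0 : ℝ) ∧
      ‖A₁‖ = ‖B₁‖ ∧ ‖A₂‖ = ‖B₂‖ ∧ ‖A₁‖ ^ 2 + ‖A₂‖ ^ 2 = 1 := by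
  subst h3
  have hω : ω₁ ≠ 0 := h1.ne'
  have hγ_eq : γ = harmonicCurve ω₁ A₁ B₁ + harmonicCurve (3 * ω₁) A₂ B₂ := by
    funext t
    rw [hγ, Pi.add_apply, harmonicCurve, harmonicCurve, ← add_assoc]
  have hγ' (t : ℝ) : deriv γ t = ω₁ • (harmonicCurve ω₁ B₁ (-A₁) t +
      harmonicCurve (3 * ω₁) ((3 : ℝ) • B₂) (-((3 : ℝ) • A₂)) t) := by
    rw [hγ_eq, ((hasDerivAt_harmonicCurve _ _ _ t).add (hasDerivAt_harmonicCurve _ _ _ t)).deriv]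
    simp only [harmonicCurve]
    module
  have hsphere_sq (t : ℝ) :
      ‖harmonicCurve ω₁ A₁ B₁ t + harmonicCurve (3 * ω₁) A₂ B₂ t‖ ^ 2 = 1 := by
    rw [← Pi.add_apply, ← hγ_eq, hsphere, one_pow]
  have hspeed_sq (t : ℝ) : ‖harmonicCurve ω₁ B₁ (-A₁) t +
      harmonicCurve (3 * ω₁) ((3 : ℝ) • B₂) (-((3 : ℝ) • A₂)) t‖ ^ 2 = Cs ^ 2 / ω₁ ^ 2 := by
    rw [eq_div_iff (pow_ne_zero 2 hω), ← hspeed t, hγ' t, norm_smul, mul_pow, Real.norm_eq_abs,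
      sq_abs, mul_comm]
  obtain ⟨hK, hc₁, hs₁, hc₂, hs₂, hc₃, hs₃⟩ :=
    gram_eqs_of_norm_sq_harmonicCurve_add_harmonicCurve_three_mul_eq hω hsphere_sq
  obtain ⟨-, hc₁', hs₁', hc₂', hs₂', -, -⟩ :=
    gram_eqs_of_norm_sq_harmonicCurve_add_harmonicCurve_three_mul_eq hω hspeed_sq
  simp only [norm_neg, inner_neg_left, inner_neg_right, real_inner_smul_right,
    real_inner_comm A₁ B₁] at hc₁' hs₁' hc₂' hs₂'
  refine ⟨by linarith, by linarith, by linarith, by linarith, by linarith, hs₃,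
    (pow_left_inj₀ (norm_nonneg _) (norm_nonneg _) two_ne_zero).1 (by linarith),
    (pow_left_inj₀ (norm_nonneg _) (norm_nonneg _) two_ne_zero).1 (by linarith), by linarith⟩
end

section
/- Let γ(t) = A₁ + cos(ωt)A₂ + sin(ωt)B₂ with ω > 0, and suppose |γ(t)| = 1 for all t. Then A₁, A₂, B₂ are pairwise orthogonal, |A₂| = |B₂|, and |A₁|² + |A₂|² = 1. -/
open Real RealInnerProductSpace

section CosSinEllipse

variable {E : Type*} [NormedAddCommGroup E] [InnerProductSpace ℝ E]

theorem norm_add_cos_smul_add_sin_smul_sq (a b c : E) (θ : ℝ) :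
    ‖a + cos θ • b + sin θ • c‖ ^ 2 =
      ‖a‖ ^ 2 + cos θ ^ 2 * ‖b‖ ^ 2 + sin θ ^ 2 * ‖c‖ ^ 2 + 2 * cos θ * ⟪a, b⟫
        + 2 * sin θ * ⟪a, c⟫ + 2 * (cos θ * sin θ) * ⟪b, c⟫ := by
  rw [← real_inner_self_eq_norm_sq]
  simp only [inner_add_left, inner_add_right, real_inner_smul_left, real_inner_smul_right,
    real_inner_self_eq_norm_sq, norm_smul, mul_pow, norm_eq_abs, sq_abs]
  rw [real_inner_comm a b, real_inner_comm a c, real_inner_comm b c]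
  ring

/- Sampling the expansion at `θ = 0, π, ±π/2` isolates `⟪a, b⟫`, `⟪a, c⟫` and `‖b‖ = ‖c‖`;
then `θ = π/4` isolates `⟪b, c⟫`. -/
theorem inner_eq_zero_of_forall_norm_add_cos_smul_add_sin_smul_eq {a b c : E} {r : ℝ}
    (h : ∀ θ : ℝ, ‖a + cos θ • b + sin θ • c‖ = r) :
    ⟪a, b⟫ = 0 ∧ ⟪a, c⟫ = 0 ∧ ⟪b, c⟫ = 0 ∧ ‖b‖ = ‖c‖ ∧ ‖a‖ ^ 2 + ‖b‖ ^ 2 = r ^ 2 := by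
  have hexp (θ : ℝ) := (h θ ▸ norm_add_cos_smul_add_sin_smul_sq a b c θ).symm
  have h0 := hexp 0
  have hπ := hexp π
  have hπ2 := hexp (π / 2)
  have hπ2' := hexp (-(π / 2))
  have hπ4 := hexp (π / 4)
  simp only [cos_zero, sin_zero, cos_pi, sin_pi, cos_pi_div_two, sin_pi_div_two, cos_neg,
    sin_neg, cos_pi_div_four, sin_pi_div_four] at h0 hπ hπ2 hπ2' hπ4
  have hab : ⟪a, b⟫ = 0 := by linarith
  have hac : ⟪a, c⟫ = 0 := by linarith
  have hbc_sq : ‖b‖ ^ 2 = ‖c‖ ^ 2 := by linarith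
  have half : (√2 / 2) ^ 2 = 1 / 2 := by
    rw [div_pow, sq_sqrt zero_le_two]; norm_num
  have hbc : ⟪b, c⟫ = 0 := by
    rw [hab, hac, ← sq, half] at hπ4
    linarith
  refine ⟨hab, hac, hbc, ?_, by linarith⟩
  exact (sq_eq_sq₀ (norm_nonneg b) (norm_nonneg c)).1 hbc_sq

end CosSinEllipse

theorem stmt_10 (ω : ℝ) (hω : 0 < ω)
    (A₁ A₂ B₂ : EuclideanSpace ℝ (Fin 4))
    (γ : ℝ → EuclideanSpace ℝ (Fin 4))
    (hγ : ∀ t : ℝ, γ t = A₁ + Real.cos (ω * t) • A₂ + Real.sin (ω * t) • B₂)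
    (hsphere : ∀ t : ℝ, ‖γ t‖ = 1) :
    inner ℝ A₁ A₂ = (0 : ℝ) ∧ inner ℝ A₁ B₂ = (0 : ℝ) ∧ inner ℝ A₂ B₂ = (0 : ℝ) ∧
      ‖A₂‖ = ‖B₂‖ ∧ ‖A₁‖ ^ 2 + ‖A₂‖ ^ 2 = 1 := by
  have h (θ : ℝ) : ‖A₁ + cos θ • A₂ + sin θ • B₂‖ = 1 := by
    rw [← mul_div_cancel₀ θ hω.ne', ← hγ]
    exact hsphere _
  simpa using inner_eq_zero_of_forall_norm_add_cos_smul_add_sin_smul_eq h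
end
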